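/- arXiv:1801.07690 — 3 statements merged into one kernel-verified Lean document; each statement's English description precedes it below -/
import Mathlib

section
/- Let Δ be the t-del Pezzo polytope in ℚ^d (d ≥ 2 even) with vertices {±e₁,…,±e_d, ±(e₁+⋯+e_d)}. Then the only lattice points of ℤ^d contained in Δ are the vertices and the origin; i.e., Δ ∩ ℤ^d = V(Δ) ∪ {0}. -/
/-- For even `d ≥ 2`, the only lattice points of `ℤ^d` in the t-del Pezzo
polytope `Δ = conv{±e₁, …, ±e_d, ±(e₁+⋯+e_d)} ⊂ ℚ^d` are its vertices and the origin:
`Δ ∩ ℤ^d = V(Δ) ∪ {0}`. -/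
theorem stmt5 (d : ℕ) (hd : 2 ≤ d) (he : Even d)
    (V : Set (Fin d → ℚ))
    (hV : V = {v | (∃ i, v = Pi.single i 1) ∨ (∃ i, v = -Pi.single i 1)
        ∨ v = (fun _ => 1) ∨ v = (fun _ => -1)}) :
    ∀ x : Fin d → ℤ,
      ((fun i => (x i : ℚ)) ∈ convexHull ℚ V ↔ ((fun i => (x i : ℚ)) ∈ V ∨ x = 0)) := by
  intro x
  constructor
  · intro hx
    -- key lemma: any linear functional bounded by 1 on V is bounded by 1 on x
    have key : ∀ (f : (Fin d → ℚ) → ℚ), IsLinearMap ℚ f → (∀ v ∈ V, f v ≤ 1) →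
        f (fun i => (x i : ℚ)) ≤ 1 := by
      intro f hf hfv
      exact convexHull_min hfv (convex_halfSpace_le hf 1) hx
    -- coordinate bounds
    have hub : ∀ i, x i ≤ 1 := by
      intro i
      have := key (fun y => y i) ⟨fun a b => rfl, fun c a => rfl⟩ ?_
      · have h' : ((x i : ℚ)) ≤ 1 := this
        exact_mod_cast h'
      · intro v hv
        rw [hV] at hv
        rcases hv with ⟨j, rfl⟩ | ⟨j, rfl⟩ | rfl | rfl
        · simp [Pi.single_apply]; split_ifs <;> norm_num
        · simp [Pi.single_apply]; split_ifs <;> norm_num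
        · norm_num
        · norm_num
    have hlb : ∀ i, -1 ≤ x i := by
      intro i
      have := key (fun y => -y i) ⟨fun a b => by simp only [Pi.add_apply]; ring, fun c a => by simp only [Pi.smul_apply, smul_eq_mul]; ring⟩ ?_
      · have h' : (-(x i : ℚ)) ≤ 1 := this
        have h'' : (-1 : ℚ) ≤ (x i : ℚ) := by linarith
        exact_mod_cast h''
      · intro v hv
        rw [hV] at hv
        rcases hv with ⟨j, rfl⟩ | ⟨j, rfl⟩ | rfl | rfl
        · simp [Pi.single_apply]; split_ifs <;> norm_num
        · simp [Pi.single_apply]; split_ifs <;> norm_num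
        · norm_num
        · norm_num
    have hdiff : ∀ i j, i ≠ j → x i - x j ≤ 1 := by
      intro i j hij
      have := key (fun y => y i - y j) ⟨fun a b => by simp only [Pi.add_apply]; ring, fun c a => by simp only [Pi.smul_apply, smul_eq_mul]; ring⟩ ?_
      · have h' : ((x i : ℚ)) - (x j : ℚ) ≤ 1 := this
        exact_mod_cast h'
      · intro v hv
        rw [hV] at hv
        rcases hv with ⟨k, rfl⟩ | ⟨k, rfl⟩ | rfl | rfl
        · simp [Pi.single_apply]; split_ifs <;> norm_num
        · simp [Pi.single_apply]; split_ifs <;> norm_num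
        · norm_num
        · norm_num
    have htri : ∀ i j k, i ≠ j → x i + x j - x k ≤ 1 := by
      intro i j k hij
      have := key (fun y => y i + y j - y k) ⟨fun a b => by simp only [Pi.add_apply]; ring, fun c a => by simp only [Pi.smul_apply, smul_eq_mul]; ring⟩ ?_
      · have h' : ((x i : ℚ)) + (x j : ℚ) - (x k : ℚ) ≤ 1 := this
        exact_mod_cast h'
      · intro v hv
        rw [hV] at hv
        rcases hv with ⟨l, rfl⟩ | ⟨l, rfl⟩ | rfl | rfl
        · simp [Pi.single_apply]
          split_ifs <;> first | (rename_i h1 h2 _; exact absurd (h1.trans h2.symm) hij) | norm_num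
        · simp [Pi.single_apply]
          split_ifs <;> norm_num
        · norm_num
        · norm_num
    have htri' : ∀ i j k, i ≠ j → -x i - x j + x k ≤ 1 := by
      intro i j k hij
      have := key (fun y => -y i - y j + y k) ⟨fun a b => by simp only [Pi.add_apply]; ring, fun c a => by simp only [Pi.smul_apply, smul_eq_mul]; ring⟩ ?_
      · have h' : -((x i : ℚ)) - (x j : ℚ) + (x k : ℚ) ≤ 1 := this
        exact_mod_cast h'
      · intro v hv
        rw [hV] at hv
        rcases hv with ⟨l, rfl⟩ | ⟨l, rfl⟩ | rfl | rfl
        · simp [Pi.single_apply]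
          split_ifs <;> norm_num
        · simp [Pi.single_apply]
          split_ifs <;> first | (rename_i h1 h2 _; exact absurd (h1.trans h2.symm) hij) | norm_num
        · norm_num
        · norm_num
    -- combinatorial conclusion
    by_cases hpos : ∃ i, x i = 1
    · obtain ⟨i, hi⟩ := hpos
      have hnn : ∀ j, 0 ≤ x j := by
        intro j
        by_cases hji : j = i
        · subst hji; omega
        · have := hdiff i j (Ne.symm hji)
          have := hub j
          omega
      by_cases hall : ∀ j, x j = 1
      · left
        rw [hV]
        right; right; left
        funext j
        rw [hall j]; norm_num
      · push_neg at hall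
        obtain ⟨k, hk⟩ := hall
        have hk0 : x k = 0 := by have := hub k; have := hnn k; omega
        have honly : ∀ j, j ≠ i → x j = 0 := by
          intro j hji
          by_contra hj
          have hj1 : x j = 1 := by have := hub j; have := hnn j; omega
          have := htri i j k (Ne.symm hji)
          omega
        left
        rw [hV]
        left
        exact ⟨i, by
          funext j
          by_cases hji : j = i
          · subst hji; rw [hi]; simp
          · rw [honly j hji]; simp [Pi.single_apply, hji]⟩
    · by_cases hneg : ∃ i, x i = -1
      · obtain ⟨i, hi⟩ := hneg
        have hnp : ∀ j, x j ≤ 0 := by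
          intro j
          by_cases hji : j = i
          · subst hji; omega
          · have := hdiff j i hji
            have := hlb j
            omega
        by_cases hall : ∀ j, x j = -1
        · left
          rw [hV]
          right; right; right
          funext j
          rw [hall j]; norm_num
        · push_neg at hall
          obtain ⟨k, hk⟩ := hall
          have hk0 : x k = 0 := by have := hlb k; have := hnp k; omega
          have honly : ∀ j, j ≠ i → x j = 0 := by
            intro j hji
            by_contra hj
            have hj1 : x j = -1 := by have := hlb j; have := hnp j; omega
            have := htri' i j k (Ne.symm hji)
            omega
          left
          rw [hV]
          right; left
          exact ⟨i, by
            funext j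
            by_cases hji : j = i
            · subst hji; rw [hi]; simp
            · rw [honly j hji]; simp [Pi.single_apply, hji]⟩
      · right
        push_neg at hpos hneg
        funext j
        have := hub j; have := hlb j
        have h1 := hpos j; have h2 := hneg j
        simp only [Pi.zero_apply]
        omega
  · rintro (h | h)
    · exact subset_convexHull ℚ V h
    · have h1 : (fun _ => (1:ℚ)) ∈ V := by rw [hV]; right; right; left; rfl
      have h2 : (fun _ => (-1:ℚ)) ∈ V := by rw [hV]; right; right; right; rfl
      have := (convex_convexHull ℚ V) (subset_convexHull ℚ V h1) (subset_convexHull ℚ V h2)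
        (by norm_num : (0:ℚ) ≤ 1/2) (by norm_num : (0:ℚ) ≤ 1/2) (by norm_num)
      convert this using 1
      subst h
      funext j
      norm_num
end

section
/- For integers d ≥ 2 and m ≥ 1 with n = md, the Klyachko polytope Δ_n^{d+1} ⊂ ℚ^n is lattice-isomorphic to the Klyachko polytope Δ_n^{m+1}: the lattice automorphism of ℤ^n defined by e'_{mi+j} = e_{d(j−1)+i+1} for i ∈ {0,…,d−1}, j ∈ {1,…,m} (suitably reindexed) maps the vertex set of Δ_n^{d+1} bijectively to the vertex set of Δ_n^{m+1}. -/
/-- The vertex set of the Klyachko polytope `Δ_n^k ⊂ ℤ^n` (for `(k-1) ∣ n`): the standard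
basis vectors; `e₁+⋯+e_n`; the `n/(k-1)` negative consecutive-block sums; and the `k-1`
negative arithmetic-progression sums (sums over residue classes mod `k-1`). -/
def klyVertexSet (n k : ℕ) : Set (Fin n → ℤ) :=
  {v | (∃ i : Fin n, v = Pi.single i 1) ∨ v = (fun _ => 1)
    ∨ (∃ j : ℕ, j < n / (k - 1) ∧
        v = fun t : Fin n => if j * (k - 1) ≤ (t : ℕ) ∧ (t : ℕ) < (j + 1) * (k - 1) then -1 else 0)
    ∨ (∃ i : ℕ, i < k - 1 ∧ v = fun t : Fin n => if (t : ℕ) % (k - 1) = i then -1 else 0)}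

/-- Interval membership `j·d ≤ a·d + r < (j+1)·d` with `r < d` pins down `a = j`. -/
lemma blk_iff (d j a r : ℕ) (hr : r < d) :
    (j * d ≤ a * d + r ∧ a * d + r < (j + 1) * d) ↔ a = j := by
  constructor
  · rintro ⟨h1, h2⟩
    rcases lt_trichotomy a j with h | h | h
    · exfalso
      have : (a + 1) * d ≤ j * d := Nat.mul_le_mul_right d h
      have : a * d + r < j * d := by
        calc a * d + r < (a + 1) * d := by nlinarith
          _ ≤ j * d := this
      omega
    · exact h
    · exfalso
      have : (j + 1) * d ≤ a * d := Nat.mul_le_mul_right d h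
      omega
  · rintro rfl
    constructor <;> nlinarith

lemma addmul_mod (a b r : ℕ) (hr : r < b) : (a * b + r) % b = r := by
  rw [Nat.add_comm, Nat.add_mul_mod_self_right, Nat.mod_eq_of_lt hr]

lemma addmul_div (a b r : ℕ) (hb : 0 < b) (hr : r < b) : (a * b + r) / b = a := by
  rw [Nat.add_comm, Nat.add_mul_div_right _ _ hb, Nat.div_eq_of_lt hr, Nat.zero_add]

/-- The transpose permutation of `Fin (m*d)`: `a*d + b ↦ b*m + a`. -/
def transposeEquiv (d m : ℕ) (hd : 0 < d) (hm : 0 < m) : Fin (m * d) ≃ Fin (m * d) where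
  toFun t := ⟨(t : ℕ) % d * m + (t : ℕ) / d, by
    have h1 : (t : ℕ) % d < d := Nat.mod_lt _ hd
    have h2 : (t : ℕ) / d < m := Nat.div_lt_of_lt_mul (lt_of_lt_of_eq t.isLt (mul_comm m d))
    calc (t : ℕ) % d * m + (t : ℕ) / d < ((t : ℕ) % d + 1) * m := by nlinarith
      _ ≤ d * m := Nat.mul_le_mul_right m h1
      _ = m * d := mul_comm d m⟩
  invFun s := ⟨(s : ℕ) % m * d + (s : ℕ) / m, by
    have h1 : (s : ℕ) % m < m := Nat.mod_lt _ hm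
    have h2 : (s : ℕ) / m < d := Nat.div_lt_of_lt_mul s.isLt
    calc (s : ℕ) % m * d + (s : ℕ) / m < ((s : ℕ) % m + 1) * d := by nlinarith
      _ ≤ m * d := Nat.mul_le_mul_right d h1⟩
  left_inv t := by
    have h2 : (t : ℕ) / d < m := Nat.div_lt_of_lt_mul (lt_of_lt_of_eq t.isLt (mul_comm m d))
    apply Fin.ext
    simp only []
    rw [addmul_mod _ _ _ h2, addmul_div _ _ _ hm h2]
    exact Nat.div_add_mod' _ _
  right_inv s := by
    have h2 : (s : ℕ) / m < d := Nat.div_lt_of_lt_mul s.isLt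
    apply Fin.ext
    simp only []
    rw [addmul_mod _ _ _ h2, addmul_div _ _ _ hd h2]
    exact Nat.div_add_mod' _ _

/-- For `d ≥ 2`, `m ≥ 1` and `n = m·d`, the Klyachko polytope `Δ_n^{d+1}`
is lattice-isomorphic to `Δ_n^{m+1}`: a `ℤ`-linear automorphism of `ℤ^n` maps the
vertex set of `Δ_n^{d+1}` bijectively onto that of `Δ_n^{m+1}`. -/
theorem stmt10 (d m : ℕ) (hd : 2 ≤ d) (hm : 1 ≤ m) :
    ∃ g : (Fin (m * d) → ℤ) ≃ₗ[ℤ] (Fin (m * d) → ℤ),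
      g '' klyVertexSet (m * d) (d + 1) = klyVertexSet (m * d) (m + 1) := by
  have hd0 : 0 < d := by omega
  have hm0 : 0 < m := by omega
  set τ := transposeEquiv d m hd0 hm0 with hτ
  have hτap : ∀ t : Fin (m * d), ((τ t : Fin (m * d)) : ℕ) = (t : ℕ) % d * m + (t : ℕ) / d := by
    intro t; rfl
  have hτsym : ∀ s : Fin (m * d), ((τ.symm s : Fin (m * d)) : ℕ)
      = (s : ℕ) % m * d + (s : ℕ) / m := by
    intro s; rfl
  refine ⟨LinearEquiv.funCongrLeft ℤ ℤ τ.symm, ?_⟩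
  have hg : ∀ (v : Fin (m * d) → ℤ) (s : Fin (m * d)),
      LinearEquiv.funCongrLeft ℤ ℤ τ.symm v s = v (τ.symm s) := fun v s => rfl
  have hgsym : ∀ (v : Fin (m * d) → ℤ) (t : Fin (m * d)),
      (LinearEquiv.funCongrLeft ℤ ℤ τ.symm).symm v t = v (τ t) := fun v t => rfl
  have hdivd : m * d / d = m := Nat.mul_div_cancel m hd0
  have hdivm : m * d / m = d := Nat.mul_div_cancel_left d hm0
  ext v
  simp only [Set.mem_image]
  constructor
  · rintro ⟨w, hw, rfl⟩
    rcases hw with ⟨i, rfl⟩ | rfl | ⟨j, hj, rfl⟩ | ⟨i, hi, rfl⟩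
    · -- basis vector
      left
      refine ⟨τ i, ?_⟩
      funext s
      rw [hg]
      simp only [Pi.single_apply]
      congr 1
      simp [eq_comm, Equiv.symm_apply_eq, Equiv.eq_symm_apply]
    · -- all ones
      right; left
      funext s; rw [hg]
    · -- block of size d → residue class mod m
      right; right; right
      simp only [Nat.add_sub_cancel] at hj ⊢
      rw [hdivd] at hj
      refine ⟨j, hj, ?_⟩
      funext s
      rw [hg]
      have hr : (s : ℕ) / m < d := Nat.div_lt_of_lt_mul s.isLt
      congr 1
      rw [hτsym]
      simp only [eq_iff_iff]
      rw [blk_iff d j _ _ hr]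
    · -- residue class mod d → block of size m
      right; right; left
      simp only [Nat.add_sub_cancel] at hi ⊢
      rw [hdivm]
      refine ⟨i, hi, ?_⟩
      funext s
      rw [hg]
      have hr : (s : ℕ) / m < d := Nat.div_lt_of_lt_mul s.isLt
      have : ((τ.symm s : Fin (m * d)) : ℕ) % d = (s : ℕ) / m := by
        rw [hτsym, addmul_mod _ _ _ hr]
      rw [this]
      congr 1
      simp only [eq_iff_iff]
      rw [← blk_iff m i ((s : ℕ) / m) ((s : ℕ) % m) (Nat.mod_lt _ hm0)]
      rw [Nat.div_add_mod']
  · intro hv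
    refine ⟨(LinearEquiv.funCongrLeft ℤ ℤ τ.symm).symm v, ?_, LinearEquiv.apply_symm_apply _ _⟩
    rcases hv with ⟨i, rfl⟩ | rfl | ⟨j, hj, rfl⟩ | ⟨i, hi, rfl⟩
    · left
      refine ⟨τ.symm i, ?_⟩
      funext t
      rw [hgsym]
      simp only [Pi.single_apply]
      congr 1
      simp [eq_comm, Equiv.symm_apply_eq, Equiv.eq_symm_apply]
    · right; left
      funext t; rw [hgsym]
    · -- block of size m → residue class mod d
      right; right; right
      simp only [Nat.add_sub_cancel] at hj ⊢
      rw [hdivm] at hj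
      refine ⟨j, hj, ?_⟩
      funext t
      rw [hgsym]
      have hr : (t : ℕ) / d < m := Nat.div_lt_of_lt_mul (lt_of_lt_of_eq t.isLt (mul_comm m d))
      congr 1
      rw [hτap]
      simp only [eq_iff_iff]
      rw [blk_iff m j _ _ hr]
    · -- residue class mod m → block of size d
      right; right; left
      simp only [Nat.add_sub_cancel] at hi ⊢
      rw [hdivd]
      refine ⟨i, hi, ?_⟩
      funext t
      rw [hgsym]
      have hr : (t : ℕ) / d < m := Nat.div_lt_of_lt_mul (lt_of_lt_of_eq t.isLt (mul_comm m d))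
      have : ((τ t : Fin (m * d)) : ℕ) % m = (t : ℕ) / d := by
        rw [hτap, addmul_mod _ _ _ hr]
      rw [this]
      congr 1
      simp only [eq_iff_iff]
      rw [← blk_iff d i ((t : ℕ) / d) ((t : ℕ) % d) (Nat.mod_lt _ hd0)]
      rw [Nat.div_add_mod']
end

section
/- Let Δ_d^2 ⊂ ℚ^d be the Klyachko polytope of order 2 (d even); then Δ_d^2 equals the t-del Pezzo polytope V_d, i.e., its vertex set is exactly {±e₁,…,±e_d, ±(e₁+⋯+e_d)}. -/
/-- The vertex set of the Klyachko polytope `Δ_n^k ⊂ ℚ^n` (for `(k-1) ∣ n`). -/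
def klyVertexSetQ (n k : ℕ) : Set (Fin n → ℚ) :=
  {v | (∃ i : Fin n, v = Pi.single i 1) ∨ v = (fun _ => 1)
    ∨ (∃ j : ℕ, j < n / (k - 1) ∧
        v = fun t : Fin n => if j * (k - 1) ≤ (t : ℕ) ∧ (t : ℕ) < (j + 1) * (k - 1) then -1 else 0)
    ∨ (∃ i : ℕ, i < k - 1 ∧ v = fun t : Fin n => if (t : ℕ) % (k - 1) = i then -1 else 0)}

lemma neg_single_eq (d : ℕ) (i : Fin d) :
    (-Pi.single i 1 : Fin d → ℚ) = fun t : Fin d => if (t:ℕ) = (i:ℕ) then -1 else 0 := by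
  funext t
  simp only [Pi.neg_apply, Pi.single_apply]
  by_cases h : t = i
  · simp [h]
  · have : ¬ ((t:ℕ) = (i:ℕ)) := fun hc => h (Fin.ext hc)
    simp [h, this]

/-- For even `d ≥ 2`, the Klyachko polytope of order 2 equals the
t-del Pezzo polytope `V_d`: its vertex set is `{±e₁,…,±e_d, ±(e₁+⋯+e_d)}`. -/
theorem stmt11 (d : ℕ) (hd : 2 ≤ d) (he : Even d) :
    klyVertexSetQ d 2 =
      {v | (∃ i, v = Pi.single i 1) ∨ (∃ i, v = -Pi.single i 1)
        ∨ v = (fun _ => 1) ∨ v = (fun _ => -1)} := by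
  ext v
  simp only [klyVertexSetQ, Set.mem_setOf_eq]
  constructor
  · rintro (h | h | ⟨j, hj, h⟩ | ⟨i, hi, h⟩)
    · exact Or.inl h
    · exact Or.inr (Or.inr (Or.inl h))
    · refine Or.inr (Or.inl ⟨⟨j, by simpa using hj⟩, ?_⟩)
      rw [neg_single_eq]
      rw [h]; funext t
      simp only [Nat.sub_self]
      congr 1
      simp [Nat.lt_succ_iff, le_antisymm_iff, And.comm]
    · interval_cases i
      refine Or.inr (Or.inr (Or.inr ?_))
      rw [h]; funext t; simp [Nat.mod_one]
  · rintro (h | ⟨i, h⟩ | h | h)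
    · exact Or.inl h
    · refine Or.inr (Or.inr (Or.inl ⟨(i:ℕ), by simpa using i.isLt, ?_⟩))
      rw [h, neg_single_eq]
      funext t
      congr 1
      simp [Nat.lt_succ_iff, le_antisymm_iff, And.comm]
    · exact Or.inr (Or.inl h)
    · refine Or.inr (Or.inr (Or.inr ⟨0, by norm_num, ?_⟩))
      rw [h]; funext t; simp [Nat.mod_one]
end
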